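/- The history in which process 1 executes I(1), D(2) then infinitely many reads returning {1,2}, and process 2 executes I(2), D(1) then infinitely many reads returning {1,2}, is not update consistent for the set UQ-ADT: there is no finite set of queries whose removal leaves a linearization recognized by the set specification. -/

import Mathlib

/-!
Keep all updates and all but finitely many reads. Each process inserts before it deletes, so
the update enumerated last is a deletion `D v` with `v ∈ {1, 2}`. Since infinitely many reads
remain, the next position holds a read, which must return `{1, 2}`; but the state there
no longer contains `v`.
-/

/-- An update-query abstract data type. -/
structure UQADT (U Qi Qo S : Type*) where
  s0 : S
  T : S → U → S
  G : S → Qi → Qo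

/-- A distributed history: events labelled by updates or queries, with a program order. -/
structure Hist (U Qi Qo E : Type*) where
  lab : E → U ⊕ (Qi × Qo)
  po : E → E → Prop

variable {U Qi Qo S E : Type*}

def Hist.upd (h : Hist U Qi Qo E) : Set E := {e | ∃ u, h.lab e = Sum.inl u}
def Hist.qry (h : Hist U Qi Qo E) : Set E := {e | ∃ q, h.lab e = Sum.inr q}

/-- `w` is an enumeration (an initial segment of `ℕ`, possibly finite) of the
set `F` of events, compatible with the relation `r`. -/
def IsLinz (r : E → E → Prop) (F : Set E) (w : ℕ → Option E) : Prop :=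
  (∀ i j a, w i = some a → w j = some a → i = j) ∧
  (∀ a ∈ F, ∃ i, w i = some a) ∧
  (∀ i a, w i = some a → a ∈ F) ∧
  (∀ i j a b, i < j → w i = some a → w j = some b → ¬ r b a) ∧
  (∀ i j, i ≤ j → w j ≠ none → w i ≠ none)

/-- The sequential word read off along `w` is recognized by `O`. -/
def Recog (O : UQADT U Qi Qo S) (h : Hist U Qi Qo E) (w : ℕ → Option E) : Prop :=
  ∃ st : ℕ → S, st 0 = O.s0 ∧ ∀ i,
    match w i with
    | none => st (i+1) = st i
    | some e =>
      match h.lab e with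
      | Sum.inl u => st (i+1) = O.T (st i) u
      | Sum.inr (qi, qo) => st (i+1) = st i ∧ O.G (st i) qi = qo

/-- Eventual consistency. -/
def EC (O : UQADT U Qi Qo S) (h : Hist U Qi Qo E) : Prop :=
  h.upd.Infinite ∨ ∃ s : S,
    {e : E | ∃ qi qo, h.lab e = Sum.inr (qi, qo) ∧ O.G s qi ≠ qo}.Finite

/-- Update consistency. -/
def UC (O : UQADT U Qi Qo S) (h : Hist U Qi Qo E) : Prop :=
  h.upd.Infinite ∨ ∃ Q' : Set E, Q' ⊆ h.qry ∧ Q'.Finite ∧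
    ∃ w, IsLinz h.po Q'ᶜ w ∧ Recog O h w

/-- A reflexive relation is acyclic if its strict part has no cycles. -/
def Acyclic (r : E → E → Prop) : Prop :=
  ∀ e, ¬ Relation.TransGen (fun a b => r a b ∧ a ≠ b) e e

/-- Strong update consistency. -/
def SUC (O : UQADT U Qi Qo S) (h : Hist U Qi Qo E) : Prop :=
  ∃ vis le : E → E → Prop,
    (∀ e, vis e e) ∧ Acyclic vis ∧
    (∀ e e', h.po e e' → vis e e') ∧
    (∀ u ∈ h.upd, {e | ¬ vis u e}.Finite) ∧
    (∀ e e' e'', vis e e' → h.po e' e'' → vis e e'') ∧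
    IsLinearOrder E le ∧ (∀ e e', vis e e' → le e e') ∧
    (∀ q ∈ h.qry, ∃ w,
      IsLinz (fun a b => le a b ∧ a ≠ b) ({u | u ∈ h.upd ∧ vis u q} ∪ {q}) w ∧
      Recog O h w)

/-- Strong eventual consistency. -/
def SEC (O : UQADT U Qi Qo S) (h : Hist U Qi Qo E) : Prop :=
  ∃ vis : E → E → Prop,
    (∀ e, vis e e) ∧ Acyclic vis ∧
    (∀ e e', h.po e e' → vis e e') ∧
    (∀ u ∈ h.upd, {e | ¬ vis u e}.Finite) ∧
    (∀ e e' e'', vis e e' → h.po e' e'' → vis e e'') ∧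
    ∀ V ⊆ h.upd, ∃ s : S, ∀ e qi qo, h.lab e = Sum.inr (qi, qo) →
      {u | u ∈ h.upd ∧ vis u e} = V → O.G s qi = qo

/-- Update operations on the shared set: insertion and deletion. -/
inductive SOp where
  | I : ℕ → SOp
  | D : ℕ → SOp
deriving DecidableEq

/-- Transition function of the set UQ-ADT. -/
def applyU (s : Finset ℕ) : SOp → Finset ℕ
  | .I v => insert v s
  | .D v => s.erase v

/-- The set UQ-ADT over support ℕ. -/
def setO : UQADT SOp Unit (Finset ℕ) (Finset ℕ) where
  s0 := ∅
  T := applyU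
  G := fun s _ => s

/-- The history of Fig. 2(b): process `false` does I(1), D(2) then reads {1,2}
forever; process `true` does I(2), D(1) then reads {1,2} forever. -/
def H6 : Hist SOp Unit (Finset ℕ) (Bool × ℕ) where
  lab := fun e =>
    match e with
    | (false, 0) => Sum.inl (SOp.I 1)
    | (false, 1) => Sum.inl (SOp.D 2)
    | (true, 0) => Sum.inl (SOp.I 2)
    | (true, 1) => Sum.inl (SOp.D 1)
    | (_, _) => Sum.inr ((), {1, 2})
  po := fun e e' => e.1 = e'.1 ∧ e.2 < e'.2

section Linearization

variable {r : E → E → Prop} {F : Set E} {w : ℕ → Option E}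

theorem IsLinz.index_lt (hw : IsLinz r F w) {i j : ℕ} {a b : E} (hi : w i = some a)
    (hj : w j = some b) (hab : r a b) (hne : a ≠ b) : i < j := by
  obtain ⟨-, -, -, hord, -⟩ := hw
  rcases lt_trichotomy i j with h | rfl | h
  · exact h
  · exact absurd (Option.some.inj (hi.symm.trans hj)) hne
  · exact absurd hab (hord j i b a h hj hi)

theorem IsLinz.ne_none_of_infinite (hw : IsLinz r F w) (hF : F.Infinite) (i : ℕ) :
    w i ≠ none := by
  intro hnone
  obtain ⟨-, hsurj, -, -, hprefix⟩ := hw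
  refine hF (((Set.finite_Iio i).image w).preimage (Option.some_injective _).injOn |>.subset ?_)
  intro a ha
  obtain ⟨j, hj⟩ := hsurj a ha
  have hji : j < i := by
    by_contra! hij
    exact hprefix i j hij (by simp [hj]) hnone
  exact ⟨j, hji, hj⟩

end Linearization

theorem Hist.mem_compl_of_mem_upd {h : Hist U Qi Qo E} {Q : Set E} (hQ : Q ⊆ h.qry) {e : E}
    (he : e ∈ h.upd) : e ∈ Qᶜ := by
  intro heQ
  obtain ⟨u, hu⟩ := he
  obtain ⟨q, hq⟩ := hQ heQ
  simp [hu] at hq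

theorem Recog.notMem_read_after_delete {h : Hist SOp Unit (Finset ℕ) E} {w : ℕ → Option E}
    (hR : Recog setO h w) {i v : ℕ} {d q : E} {s : Finset ℕ}
    (hd : w i = some d) (hdl : h.lab d = .inl (.D v))
    (hq : w (i + 1) = some q) (hql : h.lab q = .inr ((), s)) : v ∉ s := by
  obtain ⟨st, -, hstep⟩ := hR
  have hdel := hstep i
  have hread := hstep (i + 1)
  simp only [hd, hdl, hq, hql] at hdel hread
  rw [← hread.2]
  simp [setO, hdel, applyU]

theorem H6_mem_upd_iff {e : Bool × ℕ} : e ∈ H6.upd ↔ e.2 < 2 := by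
  rcases e with ⟨_ | _, _ | _ | n⟩ <;> simp [Hist.upd, H6]

theorem H6_lab_of_two_le {e : Bool × ℕ} (he : 2 ≤ e.2) : H6.lab e = .inr ((), {1, 2}) := by
  rcases e with ⟨_ | _, _ | _ | n⟩ <;> first | omega | rfl

theorem H6_lab_one (b : Bool) : H6.lab (b, 1) = .inl (.D (cond b 1 2)) := by
  cases b <;> rfl

theorem H6_upd_finite : H6.upd.Finite :=
  (Set.finite_univ.prod (Set.finite_Iio 2)).subset fun _ he => ⟨trivial, H6_mem_upd_iff.1 he⟩

theorem H6_exists_last_update_delete {F : Set (Bool × ℕ)} {w : ℕ → Option (Bool × ℕ)}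
    (hw : IsLinz H6.po F w) (hF : H6.upd ⊆ F) :
    ∃ k b, w k = some (b, 1) ∧ ∀ j e, w j = some e → e ∈ H6.upd → j ≤ k := by
  have hdel : ∀ b, ∃ i, w i = some (b, 1) := fun b => hw.2.1 _ (hF (H6_mem_upd_iff.2 one_lt_two))
  choose i hi using hdel
  obtain ⟨b, hb⟩ := Finite.exists_max i
  refine ⟨i b, b, hi b, ?_⟩
  rintro j ⟨c, n⟩ hj hupd
  obtain rfl | rfl : n = 0 ∨ n = 1 := by have := H6_mem_upd_iff.1 hupd; omega
  · exact (hw.index_lt hj (hi c) ⟨rfl, zero_lt_one⟩ (by simp)).le.trans (hb c)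
  · exact (hw.1 _ _ _ hj (hi c)).le.trans (hb c)

/-- the history `H6` is not update consistent for the set. -/
theorem stmt6 : ¬ UC setO H6 := by
  rintro (hinf | ⟨Q, hQ, hQfin, w, hw, hR⟩)
  · exact hinf H6_upd_finite
  obtain ⟨k, b, hk, hlast⟩ :=
    H6_exists_last_update_delete hw fun _ => Hist.mem_compl_of_mem_upd hQ
  obtain ⟨e, he⟩ := Option.ne_none_iff_exists'.1 (hw.ne_none_of_infinite hQfin.infinite_compl (k + 1))
  have hread : 2 ≤ e.2 := by
    by_contra! h
    exact absurd (hlast _ e he (H6_mem_upd_iff.2 h)) (by omega)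
  refine hR.notMem_read_after_delete hk (H6_lab_one b) he (H6_lab_of_two_le hread) ?_
  cases b <;> simp
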